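/- arXiv:2006.15210 — 2 statements merged into one kernel-verified Lean document; each statement's English description precedes it below -/
import Mathlib

section
/- Let x ∈ ℝ, let f, g be 5 times continuously differentiable on an open set containing x, let a₁,…,a₅ ∈ ℝ and u := x + a₁ε + a₂ε² + a₃ε³ + a₄ε⁴ + a₅ε⁵ ∈ R⁽⁶⁾. Then the coefficient of ε⁵ in the product Λ(f)(u)·Λ(g)(u) equals a₅(fg)'(x) + (a₁a₄ + a₂a₃)(fg)''(x) + (1/2)(a₁²a₃ + a₁a₂²)(fg)⁽³⁾(x) + (1/6)a₁³a₂(fg)⁽⁴⁾(x) + (1/120)a₁⁵(fg)⁽⁵⁾(x), where fg denotes the pointwise product. -/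
/-- Multiplication in the 6-dimensional truncated polynomial algebra
`R⁽⁶⁾ = ℝ[ε]/(ε⁶)`, with elements represented by their coefficient tuples
`(u 0) + (u 1)ε + (u 2)ε² + (u 3)ε³ + (u 4)ε⁴ + (u 5)ε⁵`. -/
noncomputable def R6mul (u v : Fin 6 → ℝ) : Fin 6 → ℝ :=
  ![u 0 * v 0,
    u 0 * v 1 + u 1 * v 0,
    u 0 * v 2 + u 1 * v 1 + u 2 * v 0,
    u 0 * v 3 + u 1 * v 2 + u 2 * v 1 + u 3 * v 0,
    u 0 * v 4 + u 1 * v 3 + u 2 * v 2 + u 3 * v 1 + u 4 * v 0,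
    u 0 * v 5 + u 1 * v 4 + u 2 * v 3 + u 3 * v 2 + u 4 * v 1 + u 5 * v 0]

/-- The `R⁽⁶⁾`-extension `Λ(f)` of a real function `f`, evaluated at
`x + a₁ε + a₂ε² + a₃ε³ + a₄ε⁴ + a₅ε⁵` (represented as the tuple `![x,a₁,a₂,a₃,a₄,a₅]`). -/
noncomputable def Lam (f : ℝ → ℝ) (u : Fin 6 → ℝ) : Fin 6 → ℝ :=
  ![f (u 0),
    u 1 * iteratedDeriv 1 f (u 0),
    u 2 * iteratedDeriv 1 f (u 0) + (1/2) * (u 1)^2 * iteratedDeriv 2 f (u 0),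
    u 3 * iteratedDeriv 1 f (u 0) + u 1 * u 2 * iteratedDeriv 2 f (u 0)
      + (1/6) * (u 1)^3 * iteratedDeriv 3 f (u 0),
    u 4 * iteratedDeriv 1 f (u 0)
      + (u 1 * u 3 + (1/2) * (u 2)^2) * iteratedDeriv 2 f (u 0)
      + (1/2) * (u 1)^2 * u 2 * iteratedDeriv 3 f (u 0)
      + (1/24) * (u 1)^4 * iteratedDeriv 4 f (u 0),
    u 5 * iteratedDeriv 1 f (u 0)
      + (u 1 * u 4 + u 2 * u 3) * iteratedDeriv 2 f (u 0)
      + (1/2) * ((u 1)^2 * u 3 + u 1 * (u 2)^2) * iteratedDeriv 3 f (u 0)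
      + (1/6) * (u 1)^3 * u 2 * iteratedDeriv 4 f (u 0)
      + (1/120) * (u 1)^5 * iteratedDeriv 5 f (u 0)]

theorem Lam_mul {f g : ℝ → ℝ} {u : Fin 6 → ℝ} (hf : ContDiffAt ℝ 5 f (u 0))
    (hg : ContDiffAt ℝ 5 g (u 0)) :
    Lam (fun t => f t * g t) u = R6mul (Lam f u) (Lam g u) := by
  have leibniz : ∀ k ≤ 5, iteratedDeriv k (fun t => f t * g t) (u 0) =
      ∑ i ∈ Finset.range (k + 1),
        k.choose i * iteratedDeriv i f (u 0) * iteratedDeriv (k - i) g (u 0) :=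
    fun k hk => iteratedDeriv_fun_mul (hf.of_le (by exact_mod_cast hk))
      (hg.of_le (by exact_mod_cast hk))
  ext i
  fin_cases i <;>
    simp only [R6mul, Lam, Matrix.cons_val, Fin.reduceFinMk, leibniz, Finset.sum_range_succ,
      Nat.choose, Nat.reduceLeDiff, Nat.reduceSub, Nat.reduceAdd, iteratedDeriv_zero] <;> ring

/-- The coefficient of ε⁵ in the product `Λ(f)(u)·Λ(g)(u)`. -/
theorem prod_coeff_five (x : ℝ) (f g : ℝ → ℝ)
    (hf : ContDiffAt ℝ 5 f x) (hg : ContDiffAt ℝ 5 g x)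
    (a₁ a₂ a₃ a₄ a₅ : ℝ) :
    R6mul (Lam f ![x, a₁, a₂, a₃, a₄, a₅]) (Lam g ![x, a₁, a₂, a₃, a₄, a₅]) 5
      = a₅ * iteratedDeriv 1 (fun t => f t * g t) x
        + (a₁ * a₄ + a₂ * a₃) * iteratedDeriv 2 (fun t => f t * g t) x
        + (1/2) * (a₁^2 * a₃ + a₁ * a₂^2) * iteratedDeriv 3 (fun t => f t * g t) x
        + (1/6) * a₁^3 * a₂ * iteratedDeriv 4 (fun t => f t * g t) x
        + (1/120) * a₁^5 * iteratedDeriv 5 (fun t => f t * g t) x := by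
  rw [← Lam_mul hf hg]
  rfl
end

section
/- Let x ∈ ℝ, let g be 5 times continuously differentiable on an open set containing x and f be 5 times continuously differentiable on an open set containing g(x), let a₁,…,a₅ ∈ ℝ and u := x + a₁ε + a₂ε² + a₃ε³ + a₄ε⁴ + a₅ε⁵ ∈ R⁽⁶⁾. Then the coefficient of ε⁵ in Λ(f)(Λ(g)(u)) equals a₅(f∘g)'(x) + (a₁a₄ + a₂a₃)(f∘g)''(x) + (1/2)(a₁²a₃ + a₁a₂²)(f∘g)⁽³⁾(x) + (1/6)a₁³a₂(f∘g)⁽⁴⁾(x) + (1/120)a₁⁵(f∘g)⁽⁵⁾(x). -/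
open scoped ContDiff Topology

/-- `faaDiBruno p q k` is `(f ∘ g)⁽ᵏ⁾` written in terms of `p j = f⁽ʲ⁾ ∘ g` and `q i = g⁽ⁱ⁾`. -/
def faaDiBruno {R : Type*} [CommRing R] (p q : ℕ → R) : Fin 6 → R :=
  ![p 0,
    p 1 * q 1,
    p 2 * q 1 ^ 2 + p 1 * q 2,
    p 3 * q 1 ^ 3 + 3 * p 2 * q 1 * q 2 + p 1 * q 3,
    p 4 * q 1 ^ 4 + 6 * p 3 * q 1 ^ 2 * q 2 + 3 * p 2 * q 2 ^ 2 + 4 * p 2 * q 1 * q 3 + p 1 * q 4,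
    p 5 * q 1 ^ 5 + 10 * p 4 * q 1 ^ 3 * q 2 + 15 * p 3 * q 1 * q 2 ^ 2
      + 10 * p 3 * q 1 ^ 2 * q 3 + 10 * p 2 * q 2 * q 3 + 5 * p 2 * q 1 * q 4 + p 1 * q 5]

section

variable {𝕜 F : Type*} [NontriviallyNormedField 𝕜] [NormedAddCommGroup F] [NormedSpace 𝕜 F]
  {x : 𝕜}

theorem ContDiffAt.hasDerivAt_iteratedDeriv {h : 𝕜 → F} {n : ℕ∞ω} {k : ℕ}
    (hh : ContDiffAt 𝕜 n h x) (hk : (k : ℕ∞ω) < n) :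
    HasDerivAt (iteratedDeriv k h) (iteratedDeriv (k + 1) h x) x := by
  rw [iteratedDeriv_succ, iteratedDeriv_eq_equiv_comp]
  exact ((LinearIsometryEquiv.differentiable _).differentiableAt.comp x
    (hh.differentiableAt_iteratedFDeriv hk)).hasDerivAt

theorem ContDiffAt.eventually_hasDerivAt_iteratedDeriv {h : 𝕜 → F} {n : ℕ}
    (hh : ContDiffAt 𝕜 n h x) :
    ∀ᶠ y in 𝓝 x, ∀ k < n, HasDerivAt (iteratedDeriv k h) (iteratedDeriv (k + 1) h y) y :=
  (hh.eventually (by simp)).mono fun _ hy _ hk ↦ hy.hasDerivAt_iteratedDeriv (by exact_mod_cast hk)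

theorem ContDiffAt.eventually_hasDerivAt_iteratedDeriv_comp {f g : 𝕜 → 𝕜} {n : ℕ}
    (hg : ContDiffAt 𝕜 n g x) (hf : ContDiffAt 𝕜 n f (g x)) :
    ∀ᶠ y in 𝓝 x, ∀ k < n, HasDerivAt (fun z ↦ iteratedDeriv k f (g z))
      (iteratedDeriv (k + 1) f (g y) * iteratedDeriv 1 g y) y := by
  filter_upwards [hg.eventually_hasDerivAt_iteratedDeriv,
    hg.continuousAt.eventually hf.eventually_hasDerivAt_iteratedDeriv] with y hgy hfy k hk
  have hg' := hgy 0 (by omega)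
  rw [iteratedDeriv_zero] at hg'
  exact (hfy k hk).comp y hg'

theorem Filter.EventuallyEq.iteratedDeriv_succ_of_hasDerivAt {h G G' : 𝕜 → F} {k : ℕ}
    (hG : iteratedDeriv k h =ᶠ[𝓝 x] G) (hG' : ∀ᶠ y in 𝓝 x, HasDerivAt G (G' y) y) :
    iteratedDeriv (k + 1) h =ᶠ[𝓝 x] G' := by
  rw [iteratedDeriv_succ]
  exact hG.deriv.trans (hG'.mono fun _ hy ↦ hy.deriv)

theorem hasDerivAt_faaDiBruno {P Q : ℕ → 𝕜 → 𝕜}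
    (hP : ∀ j < 5, HasDerivAt (P j) (P (j + 1) x * Q 1 x) x)
    (hQ : ∀ i < 5, HasDerivAt (Q i) (Q (i + 1) x) x) (k : Fin 5) :
    HasDerivAt (fun z ↦ faaDiBruno (P · z) (Q · z) k.castSucc)
      (faaDiBruno (P · x) (Q · x) k.succ) x := by
  fin_cases k <;>
    simp only [faaDiBruno, Fin.reduceFinMk, Fin.reduceCastSucc, Fin.reduceSucc, Matrix.cons_val] <;>
  · refine HasDerivAt.congr_deriv (by
      apply_rules [HasDerivAt.add, HasDerivAt.const_mul, HasDerivAt.mul, HasDerivAt.pow, hP, hQ]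
        <;> norm_num) ?_
    push_cast
    ring

theorem iteratedDeriv_comp_eventuallyEq_faaDiBruno {f g : 𝕜 → 𝕜}
    (hg : ContDiffAt 𝕜 5 g x) (hf : ContDiffAt 𝕜 5 f (g x)) (k : Fin 6) :
    iteratedDeriv k (f ∘ g) =ᶠ[𝓝 x]
      fun y ↦ faaDiBruno (iteratedDeriv · f (g y)) (iteratedDeriv · g y) k := by
  induction k using Fin.induction with
  | zero => simp [faaDiBruno, Function.comp_def]
  | succ k ih =>
    refine ih.iteratedDeriv_succ_of_hasDerivAt ?_
    filter_upwards [hg.eventually_hasDerivAt_iteratedDeriv,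
      hg.eventually_hasDerivAt_iteratedDeriv_comp hf] with y hgy hfy
    exact hasDerivAt_faaDiBruno hfy hgy k

end

/-- The coefficient of ε⁵ in `Λ(f)(Λ(g)(u))`. -/
theorem comp_coeff_five (x : ℝ) (g f : ℝ → ℝ)
    (hg : ContDiffAt ℝ 5 g x) (hf : ContDiffAt ℝ 5 f (g x))
    (a₁ a₂ a₃ a₄ a₅ : ℝ) :
    Lam f (Lam g ![x, a₁, a₂, a₃, a₄, a₅]) 5
      = a₅ * iteratedDeriv 1 (f ∘ g) x
        + (a₁ * a₄ + a₂ * a₃) * iteratedDeriv 2 (f ∘ g) x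
        + (1/2) * (a₁^2 * a₃ + a₁ * a₂^2) * iteratedDeriv 3 (f ∘ g) x
        + (1/6) * a₁^3 * a₂ * iteratedDeriv 4 (f ∘ g) x
        + (1/120) * a₁^5 * iteratedDeriv 5 (f ∘ g) x := by
  have faaDiBruno_at (k : ℕ) (hk : k < 6) :=
    (iteratedDeriv_comp_eventuallyEq_faaDiBruno hg hf ⟨k, hk⟩).eq_of_nhds
  rw [faaDiBruno_at 1 (by norm_num), faaDiBruno_at 2 (by norm_num), faaDiBruno_at 3 (by norm_num),
    faaDiBruno_at 4 (by norm_num), faaDiBruno_at 5 (by norm_num)]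
  simp only [Lam, faaDiBruno, Fin.mk_one, Fin.reduceFinMk, Matrix.cons_val_zero,
    Matrix.cons_val_one, Matrix.cons_val]
  ring
end
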